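/- Let X take values in a finite alphabet 𝒳 with P_min := min_x P_X(x) > 0, and let Y be finitely valued. Then P_min · ρ_m²(X;Y) ≤ ‖P_{XY} − P_X × P_Y‖_{TV} ≤ √((2 ln 2) I(X;Y)), where ‖·‖_{TV} := Σ_{x,y}|P_{XY}(x,y) − P_X(x)P_Y(y)| and I is mutual information in bits. -/

import Mathlib

open MeasureTheory ProbabilityTheory Real

noncomputable def maxCorr {Ω α β : Type} [MeasurableSpace Ω] [MeasurableSpace α]
    [MeasurableSpace β] (μ : Measure Ω) (X : Ω → α) (Y : Ω → β) : ℝ :=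
  sSup {r : ℝ | ∃ (g : α → ℝ) (f : β → ℝ), Measurable g ∧ Measurable f ∧
    (∫ ω, g (X ω) ∂μ) = 0 ∧ (∫ ω, f (Y ω) ∂μ) = 0 ∧
    (∫ ω, (g (X ω))^2 ∂μ) = 1 ∧ (∫ ω, (f (Y ω))^2 ∂μ) = 1 ∧
    r = ∫ ω, g (X ω) * f (Y ω) ∂μ}

noncomputable def corr {Ω : Type} [MeasurableSpace Ω] (μ : Measure Ω) (U V : Ω → ℝ) : ℝ :=
  (∫ ω, (U ω - ∫ x, U x ∂μ) * (V ω - ∫ x, V x ∂μ) ∂μ) /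
    (Real.sqrt (variance U μ) * Real.sqrt (variance V μ))

variable {Ω α β : Type} [MeasurableSpace Ω]
  [MeasurableSpace α] [MeasurableSingletonClass α] [Fintype α]
  [MeasurableSpace β] [MeasurableSingletonClass β] [Fintype β]

/-- Joint pmf of finitely-valued (X,Y). -/
noncomputable def pJoint (μ : Measure Ω) (X : Ω → α) (Y : Ω → β) (x : α) (y : β) : ℝ :=
  (μ (X ⁻¹' {x} ∩ Y ⁻¹' {y})).toReal

/-- Marginal pmf. -/
noncomputable def pMarg (μ : Measure Ω) (X : Ω → α) (x : α) : ℝ := (μ (X ⁻¹' {x})).toReal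

/-- χ²-divergence between the joint pmf and the product of marginals. -/
noncomputable def chiSq (μ : Measure Ω) (X : Ω → α) (Y : Ω → β) : ℝ :=
  (∑ x : α, ∑ y : β, (pJoint μ X Y x y)^2 / (pMarg μ X x * pMarg μ Y y)) - 1

/-- Mutual information in bits for finitely-valued (X,Y). -/
noncomputable def miFin (μ : Measure Ω) (X : Ω → α) (Y : Ω → β) : ℝ :=
  ∑ x : α, ∑ y : β,
    pJoint μ X Y x y * Real.logb 2 (pJoint μ X Y x y / (pMarg μ X x * pMarg μ Y y))
/-- Unnormalized total variation distance between the joint pmf and product of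
marginals. -/
noncomputable def tvDist (μ : Measure Ω) (X : Ω → α) (Y : Ω → β) : ℝ :=
  ∑ x : α, ∑ y : β, |pJoint μ X Y x y - pMarg μ X x * pMarg μ Y y|

/-!
The χ² side: a centred product `g(X) f(Y)` has covariance `∑ (P_{XY} - P_X P_Y) g f`, so
Cauchy–Schwarz with weights `P_X P_Y` bounds its square by `χ²(P_{XY} ‖ P_X × P_Y)`; each
term of `χ²` is at most `|P_{XY} - P_X P_Y| / P_min`, because `|P_{XY} - P_X P_Y| ≤ P_Y`.
The Pinsker side rests on the pointwise bound `3 (t - 1)² ≤ (2t + 4) (t log t - t + 1)`,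
which Cauchy–Schwarz with weights `2P + 4Q` (summing to 6) turns into `‖P - Q‖₁² ≤ 2 D(P ‖ Q)`.
-/

open Set Finset InformationTheory

lemma three_mul_sub_one_sq_le_klFun {t : ℝ} (ht : 0 ≤ t) :
    3 * (t - 1) ^ 2 ≤ (2 * t + 4) * klFun t := by
  set h : ℝ → ℝ := fun s => (2 * s + 4) * klFun s - 3 * (s - 1) ^ 2
  have h' : ∀ s, 0 < s → HasDerivAt h (4 * ((s + 1) * log s - 2 * (s - 1))) s := fun s hs => by
    refine ((((hasDerivAt_id' s).const_mul 2).add_const 4).mul (hasDerivAt_klFun hs.ne')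
      |>.sub ((((hasDerivAt_id' s).sub_const 1).pow 2).const_mul 3)).congr_deriv ?_
    rw [klFun_apply]
    ring
  have h'' : ∀ s, 0 < s →
      HasDerivAt (fun s => 4 * ((s + 1) * log s - 2 * (s - 1))) (4 * (log s + s⁻¹ - 1)) s :=
    fun s hs => by
      refine ((((hasDerivAt_id' s).add_const 1).mul (hasDerivAt_log hs.ne')
        |>.sub (((hasDerivAt_id' s).sub_const 1).const_mul 2)).const_mul 4).congr_deriv ?_
      field_simp
      ring
  -- `h'' = 4 (log s + 1/s - 1) ≥ 0` and `h'(1) = 0`: the convex `h` is minimised at `1`,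
  -- where it vanishes.
  have hconv : ConvexOn ℝ (Ici 0) h := by
    refine convexOn_of_hasDerivWithinAt2_nonneg (convex_Ici 0)
      (f' := fun s => 4 * ((s + 1) * log s - 2 * (s - 1))) (f'' := fun s => 4 * (log s + s⁻¹ - 1))
      (by fun_prop) (fun s hs => ?_) (fun s hs => ?_) (fun s hs => ?_) <;>
      rw [interior_Ici] at hs
    · exact (h' s hs).hasDerivWithinAt
    · exact (h'' s hs).hasDerivWithinAt
    · linarith [one_sub_inv_le_log_of_pos hs]
  have hmin : IsMinOn h (Ici 0) 1 := by
    refine hconv.isMinOn_of_rightDeriv_eq_zero (by simp) ?_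
    simpa using (h' 1 one_pos).hasDerivWithinAt.derivWithin (uniqueDiffWithinAt_Ioi 1)
  have := hmin (mem_Ici.2 ht)
  simp only [h, klFun_one, mem_ofPred_eq] at this
  linarith

lemma three_mul_sub_sq_le_mul_klFun_div {p q : ℝ} (hp : 0 ≤ p) (hq : 0 < q) :
    3 * (p - q) ^ 2 ≤ (2 * p + 4 * q) * (q * klFun (p / q)) := by
  have key := mul_le_mul_of_nonneg_left
    (three_mul_sub_one_sq_le_klFun (div_nonneg hp hq.le)) (sq_nonneg q)
  have := hq.ne'
  calc 3 * (p - q) ^ 2 = q ^ 2 * (3 * (p / q - 1) ^ 2) := by field_simp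
    _ ≤ q ^ 2 * ((2 * (p / q) + 4) * klFun (p / q)) := key
    _ = (2 * p + 4 * q) * (q * klFun (p / q)) := by field_simp

lemma sq_sum_abs_sub_le_two_mul_sum_mul_log {ι : Type*} [Fintype ι] {P Q : ι → ℝ}
    (hP : ∀ i, 0 ≤ P i) (hQ : ∀ i, 0 < Q i) (hPs : ∑ i, P i = 1) (hQs : ∑ i, Q i = 1) :
    (∑ i, |P i - Q i|) ^ 2 ≤ 2 * ∑ i, P i * log (P i / Q i) := by
  have hw : ∀ i, 0 < 2 * P i + 4 * Q i := fun i => by linarith [hP i, hQ i]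
  have hws : ∑ i, (2 * P i + 4 * Q i) = 6 := by
    rw [sum_add_distrib, ← mul_sum, ← mul_sum, hPs, hQs]
    norm_num
  have hkl : ∑ i, Q i * klFun (P i / Q i) = ∑ i, P i * log (P i / Q i) := by
    have hterm : ∀ i, Q i * klFun (P i / Q i) = P i * log (P i / Q i) + Q i - P i := fun i => by
      have := (hQ i).ne'
      rw [klFun_apply]
      field_simp
    simp only [hterm, sum_sub_distrib, sum_add_distrib, hPs, hQs, add_sub_cancel_right]
  calc (∑ i, |P i - Q i|) ^ 2 = 6 * ((∑ i, |P i - Q i|) ^ 2 / ∑ i, (2 * P i + 4 * Q i)) := by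
        rw [hws]
        ring
    _ ≤ 6 * ∑ i, |P i - Q i| ^ 2 / (2 * P i + 4 * Q i) := by
        gcongr
        exact sq_sum_div_le_sum_sq_div _ _ fun i _ => hw i
    _ ≤ 6 * ∑ i, Q i * klFun (P i / Q i) / 3 := by
        refine mul_le_mul_of_nonneg_left (sum_le_sum fun i _ => ?_) (by norm_num)
        rw [sq_abs, div_le_div_iff₀ (hw i) three_pos]
        linarith [three_mul_sub_sq_le_mul_klFun_div (hP i) (hQ i)]
    _ = 2 * ∑ i, P i * log (P i / Q i) := by
        rw [← sum_div, hkl]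
        ring

lemma sum_prod_mul_mul_eq_mul_sum {ι κ R : Type*} [Fintype ι] [Fintype κ] [CommSemiring R]
    (a u : ι → R) (b v : κ → R) :
    ∑ p : ι × κ, a p.1 * b p.2 * (u p.1 * v p.2) = (∑ i, a i * u i) * ∑ j, b j * v j := by
  rw [Fintype.sum_mul_sum, ← Fintype.sum_prod_type']
  exact sum_congr rfl fun p _ => by ring

section ChiSquare

variable {ι : Type*} [Fintype ι] {P Q : ι → ℝ}

lemma sum_sq_div_sub_one_eq_sum_sub_sq_div (hQ : ∀ i, Q i ≠ 0) (hPs : ∑ i, P i = 1)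
    (hQs : ∑ i, Q i = 1) : ∑ i, P i ^ 2 / Q i - 1 = ∑ i, (P i - Q i) ^ 2 / Q i := by
  have hterm : ∀ i, (P i - Q i) ^ 2 / Q i = P i ^ 2 / Q i - 2 * P i + Q i := fun i => by
    have := hQ i
    field_simp
    ring
  simp only [hterm, sum_add_distrib, sum_sub_distrib, ← mul_sum, hPs, hQs]
  ring

lemma sq_sum_sub_mul_le (hQ : ∀ i, 0 < Q i) (h : ι → ℝ) :
    (∑ i, (P i - Q i) * h i) ^ 2 ≤ (∑ i, (P i - Q i) ^ 2 / Q i) * ∑ i, Q i * h i ^ 2 :=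
  sum_sq_le_sum_mul_sum_of_sq_le_mul _ (fun i _ => div_nonneg (sq_nonneg _) (hQ i).le)
    (fun i _ => mul_nonneg (hQ i).le (sq_nonneg _)) fun i _ => by
      have := (hQ i).ne'
      exact le_of_eq (by field_simp)

end ChiSquare

lemma sq_sSup_le {s : Set ℝ} {c : ℝ} (hc : 0 ≤ c) (h : ∀ r ∈ s, r ^ 2 ≤ c) : sSup s ^ 2 ≤ c := by
  rcases s.eq_empty_or_nonempty with rfl | ⟨r, hr⟩
  · simpa using hc
  have habs : ∀ r ∈ s, |r| ≤ √c := fun r hr => abs_le_sqrt (h r hr)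
  have hle : sSup s ≤ √c := Real.sSup_le (fun r hr => (abs_le.1 (habs r hr)).2) (sqrt_nonneg c)
  have hge : -√c ≤ sSup s :=
    (abs_le.1 (habs r hr)).1.trans (le_csSup ⟨√c, fun r hr => (abs_le.1 (habs r hr)).2⟩ hr)
  simpa [sq_sqrt hc] using sq_le_sq' hge hle

section PmfBasic

variable {α β : Type} (μ : Measure Ω)

lemma pJoint_eq_pMarg_prodMk (X : Ω → α) (Y : Ω → β) (x : α) (y : β) :
    pJoint μ X Y x y = pMarg μ (fun ω => (X ω, Y ω)) (x, y) := by
  rw [pJoint, pMarg, ← Set.singleton_prod_singleton, Set.mk_preimage_prod]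

lemma pJoint_le_pMarg_right [IsFiniteMeasure μ] (X : Ω → α) (Y : Ω → β) (x : α) (y : β) :
    pJoint μ X Y x y ≤ pMarg μ Y y :=
  ENNReal.toReal_mono (measure_ne_top μ _) (measure_mono Set.inter_subset_right)

lemma pMarg_le_one [IsProbabilityMeasure μ] (X : Ω → α) (x : α) : pMarg μ X x ≤ 1 :=
  measureReal_le_one

end PmfBasic

section Pmf

variable (μ : Measure Ω) {X : Ω → α} {Y : Ω → β}

lemma integral_comp_eq_sum_pMarg [IsFiniteMeasure μ] (hX : Measurable X) (g : α → ℝ) :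
    ∫ ω, g (X ω) ∂μ = ∑ x, pMarg μ X x * g x := by
  rw [← integral_map hX.aemeasurable (measurable_of_countable g).aestronglyMeasurable,
    integral_fintype Integrable.of_finite]
  refine sum_congr rfl fun x _ => ?_
  rw [smul_eq_mul, measureReal_def, Measure.map_apply hX (measurableSet_singleton x), pMarg]

lemma integral_comp_eq_sum_pJoint [IsFiniteMeasure μ] (hX : Measurable X) (hY : Measurable Y)
    (F : α → β → ℝ) :
    ∫ ω, F (X ω) (Y ω) ∂μ = ∑ p : α × β, pJoint μ X Y p.1 p.2 * F p.1 p.2 := by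
  simp only [pJoint_eq_pMarg_prodMk, Prod.mk.eta]
  exact integral_comp_eq_sum_pMarg μ (hX.prodMk hY) fun p => F p.1 p.2

lemma sum_pMarg [IsProbabilityMeasure μ] (hX : Measurable X) : ∑ x, pMarg μ X x = 1 := by
  simpa using (integral_comp_eq_sum_pMarg μ hX fun _ => 1).symm

lemma sum_pJoint [IsProbabilityMeasure μ] (hX : Measurable X) (hY : Measurable Y) :
    ∑ p : α × β, pJoint μ X Y p.1 p.2 = 1 := by
  simpa using (integral_comp_eq_sum_pJoint μ hX hY fun _ _ => 1).symm

lemma sum_pMarg_mul_pMarg [IsProbabilityMeasure μ] (hX : Measurable X) (hY : Measurable Y) :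
    ∑ p : α × β, pMarg μ X p.1 * pMarg μ Y p.2 = 1 := by
  rw [Fintype.sum_prod_type' (fun x y => pMarg μ X x * pMarg μ Y y), ← Fintype.sum_mul_sum,
    sum_pMarg μ hX, sum_pMarg μ hY, one_mul]

end Pmf

section Bounds

variable (μ : Measure Ω) [IsProbabilityMeasure μ] {X : Ω → α} {Y : Ω → β}

lemma chiSq_eq_sum_sq_div (hX : Measurable X) (hY : Measurable Y)
    (hpX : ∀ x, 0 < pMarg μ X x) (hpY : ∀ y, 0 < pMarg μ Y y) :
    chiSq μ X Y = ∑ p : α × β, (pJoint μ X Y p.1 p.2 - pMarg μ X p.1 * pMarg μ Y p.2) ^ 2 /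
      (pMarg μ X p.1 * pMarg μ Y p.2) := by
  rw [chiSq, ← Fintype.sum_prod_type']
  exact sum_sq_div_sub_one_eq_sum_sub_sq_div (fun p => (mul_pos (hpX p.1) (hpY p.2)).ne')
    (sum_pJoint μ hX hY) (sum_pMarg_mul_pMarg μ hX hY)

lemma sq_integral_mul_le_chiSq (hX : Measurable X) (hY : Measurable Y)
    (hpX : ∀ x, 0 < pMarg μ X x) (hpY : ∀ y, 0 < pMarg μ Y y) {g : α → ℝ} {f : β → ℝ}
    (hg : ∫ ω, g (X ω) ∂μ = 0) (hg2 : ∫ ω, g (X ω) ^ 2 ∂μ = 1)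
    (hf2 : ∫ ω, f (Y ω) ^ 2 ∂μ = 1) :
    (∫ ω, g (X ω) * f (Y ω) ∂μ) ^ 2 ≤ chiSq μ X Y := by
  rw [integral_comp_eq_sum_pMarg μ hX] at hg
  rw [integral_comp_eq_sum_pMarg μ hX (fun x => g x ^ 2)] at hg2
  rw [integral_comp_eq_sum_pMarg μ hY (fun y => f y ^ 2)] at hf2
  have hcov : ∫ ω, g (X ω) * f (Y ω) ∂μ = ∑ p : α × β,
      (pJoint μ X Y p.1 p.2 - pMarg μ X p.1 * pMarg μ Y p.2) * (g p.1 * f p.2) := by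
    have hprod : ∑ p : α × β, pMarg μ X p.1 * pMarg μ Y p.2 * (g p.1 * f p.2) = 0 := by
      rw [sum_prod_mul_mul_eq_mul_sum, hg, zero_mul]
    rw [integral_comp_eq_sum_pJoint μ hX hY (fun x y => g x * f y)]
    simp only [sub_mul, sum_sub_distrib, hprod, sub_zero]
  have hnorm : ∑ p : α × β, pMarg μ X p.1 * pMarg μ Y p.2 * (g p.1 * f p.2) ^ 2 = 1 := by
    have h := sum_prod_mul_mul_eq_mul_sum (pMarg μ X) (fun x => g x ^ 2) (pMarg μ Y)
      fun y => f y ^ 2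
    rw [hg2, hf2, one_mul] at h
    simpa only [mul_pow] using h
  have hcs := sq_sum_sub_mul_le (P := fun p : α × β => pJoint μ X Y p.1 p.2)
    (fun p => mul_pos (hpX p.1) (hpY p.2)) fun p => g p.1 * f p.2
  rwa [hnorm, mul_one, ← chiSq_eq_sum_sq_div μ hX hY hpX hpY, ← hcov] at hcs

lemma maxCorr_sq_le_chiSq (hX : Measurable X) (hY : Measurable Y)
    (hpX : ∀ x, 0 < pMarg μ X x) (hpY : ∀ y, 0 < pMarg μ Y y) :
    maxCorr μ X Y ^ 2 ≤ chiSq μ X Y := by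
  have hchi : 0 ≤ chiSq μ X Y := by
    rw [chiSq_eq_sum_sq_div μ hX hY hpX hpY]
    exact sum_nonneg fun p _ => div_nonneg (sq_nonneg _) (mul_pos (hpX p.1) (hpY p.2)).le
  refine sq_sSup_le hchi ?_
  rintro r ⟨g, f, -, -, hg, -, hg2, hf2, rfl⟩
  exact sq_integral_mul_le_chiSq μ hX hY hpX hpY hg hg2 hf2

lemma iInf_pMarg_mul_chiSq_le_tvDist (hX : Measurable X) (hY : Measurable Y)
    (hpX : ∀ x, 0 < pMarg μ X x) (hpY : ∀ y, 0 < pMarg μ Y y) :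
    (⨅ x, pMarg μ X x) * chiSq μ X Y ≤ tvDist μ X Y := by
  rw [chiSq_eq_sum_sq_div μ hX hY hpX hpY, tvDist, ← Fintype.sum_prod_type', mul_sum]
  refine sum_le_sum fun ⟨x, y⟩ _ => ?_
  set d := pJoint μ X Y x y - pMarg μ X x * pMarg μ Y y
  have hQ : 0 < pMarg μ X x * pMarg μ Y y := mul_pos (hpX x) (hpY y)
  have hd : |d| ≤ pMarg μ Y y :=
    abs_sub_le_of_nonneg_of_le ENNReal.toReal_nonneg (pJoint_le_pMarg_right μ X Y x y) hQ.le
      (mul_le_of_le_one_left (hpY y).le (pMarg_le_one μ X x))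
  have hmin : (⨅ x, pMarg μ X x) * |d| ≤ pMarg μ X x * pMarg μ Y y :=
    mul_le_mul (ciInf_le (Finite.bddBelow_range _) x) hd (abs_nonneg d) (hpX x).le
  calc (⨅ x, pMarg μ X x) * (d ^ 2 / (pMarg μ X x * pMarg μ Y y))
      = (⨅ x, pMarg μ X x) * |d| / (pMarg μ X x * pMarg μ Y y) * |d| := by
        rw [← sq_abs]
        ring
    _ ≤ 1 * |d| := mul_le_mul_of_nonneg_right (div_le_one_of_le₀ hmin hQ.le) (abs_nonneg d)
    _ = |d| := one_mul _

lemma tvDist_le_sqrt_miFin (hX : Measurable X) (hY : Measurable Y)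
    (hpX : ∀ x, 0 < pMarg μ X x) (hpY : ∀ y, 0 < pMarg μ Y y) :
    tvDist μ X Y ≤ √(2 * log 2 * miFin μ X Y) := by
  have hnats : log 2 * miFin μ X Y = ∑ p : α × β, pJoint μ X Y p.1 p.2 *
      log (pJoint μ X Y p.1 p.2 / (pMarg μ X p.1 * pMarg μ Y p.2)) := by
    rw [miFin, ← Fintype.sum_prod_type', mul_sum]
    refine sum_congr rfl fun p _ => ?_
    rw [logb, mul_div_assoc']
    field_simp
  have hsq : tvDist μ X Y ^ 2 ≤ 2 * log 2 * miFin μ X Y := by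
    rw [tvDist, ← Fintype.sum_prod_type', mul_assoc, hnats]
    exact sq_sum_abs_sub_le_two_mul_sum_mul_log (fun _ => ENNReal.toReal_nonneg)
      (fun p => mul_pos (hpX p.1) (hpY p.2)) (sum_pJoint μ hX hY) (sum_pMarg_mul_pMarg μ hX hY)
  exact (le_abs_self _).trans (abs_le_sqrt hsq)

end Bounds

/-- P_min·ρ_m²(X;Y) ≤ ‖P_XY − P_X×P_Y‖_TV ≤ √((2 ln 2)·I(X;Y)). -/
theorem stmt12 (μ : Measure Ω) [IsProbabilityMeasure μ]
    (X : Ω → α) (Y : Ω → β) (hX : Measurable X) (hY : Measurable Y)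
    (hpX : ∀ x : α, 0 < pMarg μ X x) (hpY : ∀ y : β, 0 < pMarg μ Y y) :
    (⨅ x : α, pMarg μ X x) * (maxCorr μ X Y)^2 ≤ tvDist μ X Y ∧
    tvDist μ X Y ≤ Real.sqrt ((2 * Real.log 2) * miFin μ X Y) :=
  ⟨(mul_le_mul_of_nonneg_left (maxCorr_sq_le_chiSq μ hX hY hpX hpY)
      (Real.iInf_nonneg fun x => (hpX x).le)).trans
    (iInf_pMarg_mul_chiSq_le_tvDist μ hX hY hpX hpY),
  tvDist_le_sqrt_miFin μ hX hY hpX hpY⟩
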